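/- arXiv:2410.09932 — 2 statements merged into one kernel-verified Lean document; each statement's English description precedes it below -/
import Mathlib

section
/- Let R be a commutative ring admitting a tangle of one-element annihilator cosets, i.e. cosets Cᵢ = fᵢ + Ann(eᵢ) for i = 1,2,3 with pairwise nonempty intersections and empty triple intersection. Then there exist a,b,c,d ∈ R such that Ann(a), Ann(b), and d + Ann(c) form a tangle (pairwise intersecting, with empty triple intersection). -/
/-- The coset `f + Ann(e)` of a one-element annihilator, described as
`{x | e * (x - f) = 0}`. -/
def annCoset {R : Type*} [CommRing R] (e f : R) : Set R := {x : R | e * (x - f) = 0}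

/-- If a commutative ring admits a tangle of one-element annihilator cosets, it
admits a tangle of the homogenized form `Ann(a)`, `Ann(b)`, `d + Ann(c)`. -/
theorem tangle_homogenised {R : Type*} [CommRing R]
    (h : ∃ e₁ f₁ e₂ f₂ e₃ f₃ : R,
      (annCoset e₁ f₁ ∩ annCoset e₂ f₂).Nonempty ∧
      (annCoset e₁ f₁ ∩ annCoset e₃ f₃).Nonempty ∧
      (annCoset e₂ f₂ ∩ annCoset e₃ f₃).Nonempty ∧
      annCoset e₁ f₁ ∩ annCoset e₂ f₂ ∩ annCoset e₃ f₃ = ∅) :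
    ∃ a b c d : R,
      ({x : R | a * x = 0} ∩ {x : R | b * x = 0}).Nonempty ∧
      ({x : R | a * x = 0} ∩ annCoset c d).Nonempty ∧
      ({x : R | b * x = 0} ∩ annCoset c d).Nonempty ∧
      {x : R | a * x = 0} ∩ {x : R | b * x = 0} ∩ annCoset c d = ∅ := by
  obtain ⟨e₁, f₁, e₂, f₂, e₃, f₃, ⟨p, hp1, hp2⟩, ⟨q, hq1, hq3⟩, ⟨r, hr2, hr3⟩, hemp⟩ := h
  simp only [annCoset, Set.mem_setOf_eq] at *
  refine ⟨e₁, e₂, e₃, f₃ - p, ⟨0, ?_, ?_⟩, ⟨q - p, ?_, ?_⟩, ⟨r - p, ?_, ?_⟩, ?_⟩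
  · simp
  · simp
  · have := hq1; have := hp1
    simp only [Set.mem_setOf_eq]
    have : e₁ * (q - p) = e₁ * (q - f₁) - e₁ * (p - f₁) := by ring
    rw [this, hq1, hp1]; ring
  · simp only [annCoset, Set.mem_setOf_eq]
    have : e₃ * (q - p - (f₃ - p)) = e₃ * (q - f₃) := by ring
    rw [this, hq3]
  · simp only [Set.mem_setOf_eq]
    have : e₂ * (r - p) = e₂ * (r - f₂) - e₂ * (p - f₂) := by ring
    rw [this, hr2, hp2]; ring
  · simp only [annCoset, Set.mem_setOf_eq]
    have : e₃ * (r - p - (f₃ - p)) = e₃ * (r - f₃) := by ring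
    rw [this, hr3]
  · ext x
    simp only [Set.mem_inter_iff, Set.mem_setOf_eq, annCoset, Set.mem_empty_iff_false,
      iff_false]
    rintro ⟨⟨h1, h2⟩, h3⟩
    have hx : x + p ∈ ({y : R | e₁ * (y - f₁) = 0} ∩ {y : R | e₂ * (y - f₂) = 0}
        ∩ {y : R | e₃ * (y - f₃) = 0}) := by
      refine ⟨⟨?_, ?_⟩, ?_⟩ <;> simp only [Set.mem_setOf_eq]
      · have : e₁ * (x + p - f₁) = e₁ * x + e₁ * (p - f₁) := by ring
        rw [this, h1, hp1]; ring
      · have : e₂ * (x + p - f₂) = e₂ * x + e₂ * (p - f₂) := by ring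
        rw [this, h2, hp2]; ring
      · have : e₃ * (x + p - f₃) = e₃ * (x - (f₃ - p)) := by ring
        rw [this, h3]
    rw [hemp] at hx
    exact hx
end

section
/- Every finite commutative ring satisfying the magic square property (for all a,b,c,d: a·b = 0 and c·d = 0 implies a·d = 0 or b·c = 0) is a local ring. -/
lemma nonunit_zero_divisor {R : Type*} [CommRing R] [Finite R] {a : R}
    (h : ¬IsUnit a) : ∃ b : R, b ≠ 0 ∧ a * b = 0 := by
  by_contra hc
  push_neg at hc
  apply h
  have hinj : Function.Injective (fun x : R => a * x) := by
    intro x y hxy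
    simp only at hxy
    have h0 : a * (x - y) = 0 := by rw [mul_sub, hxy, sub_self]
    rcases eq_or_ne (x - y) 0 with h | h
    · exact sub_eq_zero.mp h
    · exact absurd h0 (hc (x - y) h)
  have hsurj := (Finite.injective_iff_surjective).mp hinj
  obtain ⟨b, hb⟩ := hsurj 1
  exact IsUnit.of_mul_eq_one (a := a) b hb

/-- Every finite nontrivial commutative ring satisfying the magic square property
is a local ring. -/
theorem magic_square_implies_local {R : Type*} [CommRing R] [Finite R] [Nontrivial R]
    (hms : ∀ a b c d : R, a * b = 0 → c * d = 0 → a * d = 0 ∨ b * c = 0) :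
    IsLocalRing R := by
  apply IsLocalRing.of_isUnit_or_isUnit_one_sub_self
  intro a
  by_contra hc
  push_neg at hc
  obtain ⟨ha, ha'⟩ := hc
  obtain ⟨b, hb0, hab⟩ := nonunit_zero_divisor ha
  obtain ⟨c, hc0, hac⟩ := nonunit_zero_divisor ha'
  rcases hms a b (1 - a) c hab hac with h | h
  · apply hc0
    have : c = a * c + (1 - a) * c := by ring
    rw [this, h, hac, add_zero]
  · apply hb0
    have : b = a * b + (1 - a) * b := by ring
    rw [this, hab, mul_comm, h, add_zero]
end
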